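/- arXiv:1710.04444 — 2 statements merged into one kernel-verified Lean document; each statement's English description precedes it below -/
import Mathlib

section
/- Let T be a connected graded S-ring and P an S-subbimodule such that P^{≤n} := P ∩ T^{≤n} is a direct summand of P^{≤n+1} as an S-bimodule for all n. Then there exists a morphism of filtered S-bimodules α : R_P → T with degree-zero component the inclusion, such that P = α(R_P). -/
variable {T : Type*} [Ring T]

/-- Projection onto the degree `n` homogeneous component. -/
noncomputable def projFun (𝒜 : ℕ → AddSubgroup T) [GradedRing 𝒜] (n : ℕ) (x : T) : T :=
  (DirectSum.decompose 𝒜 x n : T)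

lemma projFun_add (𝒜 : ℕ → AddSubgroup T) [GradedRing 𝒜] (n : ℕ) (x y : T) :
    projFun 𝒜 n (x + y) = projFun 𝒜 n x + projFun 𝒜 n y := by
  unfold projFun
  rw [DirectSum.decompose_add, DirectSum.add_apply, AddSubgroup.coe_add]

lemma projFun_neg (𝒜 : ℕ → AddSubgroup T) [GradedRing 𝒜] (n : ℕ) (x : T) :
    projFun 𝒜 n (-x) = - projFun 𝒜 n x := by
  unfold projFun
  rw [DirectSum.decompose_neg, DFinsupp.neg_apply, AddSubgroup.coe_neg]

/-- The `S`-subbimodule `T^{≤ n}` of elements of degree at most `n`. -/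
noncomputable def degLE (𝒜 : ℕ → AddSubgroup T) [GradedRing 𝒜] (n : ℕ) : AddSubgroup T where
  carrier := {x | ∀ m, n < m → projFun 𝒜 m x = 0}
  zero_mem' := by
    intro m hm
    unfold projFun
    rw [DirectSum.decompose_zero, DirectSum.zero_apply, AddSubgroup.coe_zero]
  add_mem' := by
    intro a b ha hb m hm
    rw [projFun_add, ha m hm, hb m hm, add_zero]
  neg_mem' := by
    intro a ha m hm
    rw [projFun_neg, ha m hm, neg_zero]

/-- `y` is the leading homogeneous part of `x`. -/
def IsLH (𝒜 : ℕ → AddSubgroup T) [GradedRing 𝒜] (x y : T) : Prop :=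
  (x = 0 ∧ y = 0) ∨
    ∃ m, y = projFun 𝒜 m x ∧ y ≠ 0 ∧ ∀ k, m < k → projFun 𝒜 k x = 0

/-- `LH(X)`, the set of leading homogeneous parts of elements of `X`. -/
def leadSet (𝒜 : ℕ → AddSubgroup T) [GradedRing 𝒜] (X : Set T) : Set T :=
  {y | ∃ x ∈ X, IsLH 𝒜 x y}

/-- An additive subgroup of `T` which is an `S = T^0`-subbimodule. -/
def IsSubbimodule (𝒜 : ℕ → AddSubgroup T) (X : AddSubgroup T) : Prop :=
  ∀ s ∈ 𝒜 0, ∀ x ∈ X, s * x ∈ X ∧ x * s ∈ X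

/-- `T` is strongly graded: `T^{n+1} = T^1 T^n`. -/
def StronglyGraded (𝒜 : ℕ → AddSubgroup T) : Prop :=
  ∀ n, (𝒜 (n + 1) : Set T) ⊆
    ↑(AddSubgroup.closure {y : T | ∃ a ∈ 𝒜 1, ∃ b ∈ 𝒜 n, y = a * b})

/-- `R_X`, the graded subbimodule generated by the leading homogeneous parts of `X`. -/
noncomputable def leadSub (𝒜 : ℕ → AddSubgroup T) [GradedRing 𝒜] (X : Set T) : AddSubgroup T :=
  AddSubgroup.closure (⋃ n, leadSet 𝒜 X ∩ (𝒜 n : Set T))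

/-!
Put `P_n := P ∩ T^{≤n}` and let `B_n ⊆ T^n` be the set of degree-`n` parts of elements of
`P_n`, so that `R_P = ⊕ B_n`. Choosing a bimodule complement `Q_{n+1}` of `P_n` in `P_{n+1}`
(and `Q_0 := P_0`), the projection `π_n : Q_n → B_n` is a bijective bimodule map: its kernel is
`Q_n ∩ P_{n-1} = 0`. Its inverse `σ_n` is the identity in degree `n` up to lower-order terms, and
`α := Σ_n σ_n ∘ π_n` is a filtered bimodule map with `α(⊕_{k≤n} B_k) = Q_0 + ⋯ + Q_n = P_n`.
-/

lemma IsSubbimodule.inf {𝒜 : ℕ → AddSubgroup T} {X Y : AddSubgroup T} (hX : IsSubbimodule 𝒜 X)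
    (hY : IsSubbimodule 𝒜 Y) : IsSubbimodule 𝒜 (X ⊓ Y) := fun s hs _ ⟨hxX, hxY⟩ =>
  ⟨⟨(hX s hs _ hxX).1, (hY s hs _ hxY).1⟩, ⟨(hX s hs _ hxX).2, (hY s hs _ hxY).2⟩⟩

section Graded

variable (𝒜 : ℕ → AddSubgroup T) [GradedRing 𝒜]

lemma projFun_mem (n : ℕ) (x : T) : projFun 𝒜 n x ∈ 𝒜 n :=
  (DirectSum.decompose 𝒜 x n).2

lemma projFun_eq_proj (n : ℕ) (x : T) : projFun 𝒜 n x = GradedRing.proj 𝒜 n x := rfl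

lemma projFun_zero (n : ℕ) : projFun 𝒜 n (0 : T) = 0 :=
  map_zero (GradedRing.proj 𝒜 n)

lemma projFun_sub (n : ℕ) (x y : T) :
    projFun 𝒜 n (x - y) = projFun 𝒜 n x - projFun 𝒜 n y :=
  map_sub (GradedRing.proj 𝒜 n) x y

lemma projFun_of_mem {n : ℕ} {x : T} (h : x ∈ 𝒜 n) : projFun 𝒜 n x = x :=
  DirectSum.decompose_of_mem_same 𝒜 h

lemma projFun_of_mem_of_ne {m n : ℕ} {x : T} (h : x ∈ 𝒜 m) (hmn : m ≠ n) :
    projFun 𝒜 n x = 0 :=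
  DirectSum.decompose_of_mem_ne 𝒜 h hmn

lemma projFun_mul_left {s : T} (hs : s ∈ 𝒜 0) (n : ℕ) (x : T) :
    projFun 𝒜 n (s * x) = s * projFun 𝒜 n x :=
  DirectSum.coe_decompose_mul_of_left_mem_zero 𝒜 hs

lemma projFun_mul_right {s : T} (hs : s ∈ 𝒜 0) (n : ℕ) (x : T) :
    projFun 𝒜 n (x * s) = projFun 𝒜 n x * s :=
  DirectSum.coe_decompose_mul_of_right_mem_zero 𝒜 hs

lemma exists_finset_projFun_eq_zero (x : T) :
    ∃ s : Finset ℕ, ∀ i ∉ s, projFun 𝒜 i x = 0 := by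
  classical
  exact ⟨(DirectSum.decompose 𝒜 x).support, fun i hi => by
    rw [projFun, DFinsupp.notMem_support_iff.mp hi, ZeroMemClass.coe_zero]⟩

lemma exists_mem_degLE (x : T) : ∃ n, x ∈ degLE 𝒜 n := by
  obtain ⟨s, hs⟩ := exists_finset_projFun_eq_zero 𝒜 x
  exact ⟨s.sup id, fun m hm => hs m fun hmem => (Finset.le_sup (f := id) hmem).not_gt hm⟩

lemma degLE_mono {m n : ℕ} (h : m ≤ n) : degLE 𝒜 m ≤ degLE 𝒜 n :=
  fun _ hx k hk => hx k (h.trans_lt hk)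

lemma mem_degLE_of_projFun_eq_zero {n : ℕ} {x : T} (hx : x ∈ degLE 𝒜 (n + 1))
    (h : projFun 𝒜 (n + 1) x = 0) : x ∈ degLE 𝒜 n := fun m hm => by
  rcases (Nat.succ_le_of_lt hm).eq_or_lt with rfl | hlt
  exacts [h, hx m hlt]

lemma eq_zero_of_mem_degLE_zero {x : T} (hx : x ∈ degLE 𝒜 0) (h : projFun 𝒜 0 x = 0) :
    x = 0 := by
  have hcomp : ∀ i, projFun 𝒜 i x = 0 := fun i => by
    rcases i.eq_zero_or_pos with rfl | hi
    exacts [h, hx i hi]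
  apply (DirectSum.decompose 𝒜).injective
  rw [DirectSum.decompose_zero]
  ext i
  exact hcomp i

lemma isSubbimodule_degLE (n : ℕ) : IsSubbimodule 𝒜 (degLE 𝒜 n) := fun s hs x hx =>
  ⟨fun m hm => by rw [projFun_mul_left 𝒜 hs, hx m hm, mul_zero],
   fun m hm => by rw [projFun_mul_right 𝒜 hs, hx m hm, zero_mul]⟩

/-- `B_n`: the degree-`n` parts of elements of `P ∩ T^{≤n}`, i.e. `(LH(P) ∩ T^n) ∪ {0}`. -/
noncomputable def leadComponent (P : AddSubgroup T) (n : ℕ) : AddSubgroup T :=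
  (P ⊓ degLE 𝒜 n).map (GradedRing.proj 𝒜 n)

lemma mem_leadComponent {P : AddSubgroup T} {n : ℕ} {a : T} :
    a ∈ leadComponent 𝒜 P n ↔ ∃ x ∈ P ⊓ degLE 𝒜 n, projFun 𝒜 n x = a :=
  AddSubgroup.mem_map

lemma leadComponent_le_leadSub (P : AddSubgroup T) (n : ℕ) :
    leadComponent 𝒜 P n ≤ leadSub 𝒜 (P : Set T) := by
  rintro _ ⟨x, ⟨hxP, hxn⟩, rfl⟩
  by_cases h : projFun 𝒜 n x = 0
  · rw [← projFun_eq_proj, h]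
    exact zero_mem _
  · exact AddSubgroup.subset_closure <| Set.mem_iUnion.mpr
      ⟨n, ⟨x, hxP, Or.inr ⟨n, rfl, h, hxn⟩⟩, projFun_mem 𝒜 n x⟩

lemma projFun_mem_leadComponent {P : AddSubgroup T} {x : T}
    (hx : x ∈ leadSub 𝒜 (P : Set T)) (n : ℕ) : projFun 𝒜 n x ∈ leadComponent 𝒜 P n := by
  induction hx using AddSubgroup.closure_induction generalizing n with
  | mem g hg =>
    obtain ⟨m, ⟨z, hzP, hzg⟩, hgm⟩ := Set.mem_iUnion.mp hg
    rcases hzg with ⟨-, rfl⟩ | ⟨k, rfl, hne, htop⟩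
    · rw [projFun_zero]
      exact zero_mem _
    · have hkm : k = m := by
        by_contra hkm
        exact hne (by rw [← projFun_of_mem 𝒜 hgm, projFun_of_mem_of_ne 𝒜 (projFun_mem 𝒜 k z) hkm])
      subst hkm
      by_cases hkn : k = n
      · subst hkn
        rw [projFun_of_mem 𝒜 hgm]
        exact (mem_leadComponent 𝒜).mpr ⟨z, ⟨hzP, htop⟩, rfl⟩
      · rw [projFun_of_mem_of_ne 𝒜 hgm hkn]
        exact zero_mem _
  | zero =>
    rw [projFun_zero]
    exact zero_mem _
  | add a b _ _ ha hb =>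
    rw [projFun_add]
    exact add_mem (ha n) (hb n)
  | neg a _ ha =>
    rw [projFun_neg]
    exact neg_mem (ha n)

/-- `Q` lifts the leading component `B_n` of `P` isomorphically along the projection `π_n`. -/
structure IsLeadSection (P : AddSubgroup T) (n : ℕ) (Q : AddSubgroup T) : Prop where
  le : Q ≤ P ⊓ degLE 𝒜 n
  isSubbimodule : IsSubbimodule 𝒜 Q
  eq_zero_of_projFun_eq_zero : ∀ q ∈ Q, projFun 𝒜 n q = 0 → q = 0
  leadComponent_le : leadComponent 𝒜 P n ≤ Q.map (GradedRing.proj 𝒜 n)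

lemma isLeadSection_zero {P : AddSubgroup T} (hP : IsSubbimodule 𝒜 P) :
    IsLeadSection 𝒜 P 0 (P ⊓ degLE 𝒜 0) where
  le := le_rfl
  isSubbimodule := hP.inf (isSubbimodule_degLE 𝒜 0)
  eq_zero_of_projFun_eq_zero _ hq := eq_zero_of_mem_degLE_zero 𝒜 hq.2
  leadComponent_le := le_rfl

lemma isLeadSection_succ {P Q : AddSubgroup T} {n : ℕ} (hQ : IsSubbimodule 𝒜 Q)
    (hle : Q ≤ P ⊓ degLE 𝒜 (n + 1)) (hinf : (P ⊓ degLE 𝒜 n) ⊓ Q = ⊥)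
    (hsup : (P ⊓ degLE 𝒜 n) ⊔ Q = P ⊓ degLE 𝒜 (n + 1)) :
    IsLeadSection 𝒜 P (n + 1) Q where
  le := hle
  isSubbimodule := hQ
  eq_zero_of_projFun_eq_zero q hq h := by
    have hqP := hle hq
    have hq' : q ∈ (P ⊓ degLE 𝒜 n) ⊓ Q := ⟨⟨hqP.1, mem_degLE_of_projFun_eq_zero 𝒜 hqP.2 h⟩, hq⟩
    rwa [hinf] at hq'
  leadComponent_le := by
    rintro _ ⟨x, hx, rfl⟩
    rw [← hsup] at hx
    obtain ⟨y, hy, q, hq, rfl⟩ := AddSubgroup.mem_sup.mp hx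
    refine ⟨q, hq, ?_⟩
    simp only [← projFun_eq_proj, projFun_add, hy.2 (n + 1) n.lt_succ_self, zero_add]

lemma exists_isLeadSection {P : AddSubgroup T} (hP : IsSubbimodule 𝒜 P)
    (hsummand : ∀ n, ∃ Q : AddSubgroup T, IsSubbimodule 𝒜 Q ∧
      Q ≤ P ⊓ degLE 𝒜 (n + 1) ∧ (P ⊓ degLE 𝒜 n) ⊓ Q = ⊥ ∧
      (P ⊓ degLE 𝒜 n) ⊔ Q = P ⊓ degLE 𝒜 (n + 1)) :
    ∃ Q : ℕ → AddSubgroup T, ∀ n, IsLeadSection 𝒜 P n (Q n) := by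
  choose Q hQ hle hinf hsup using hsummand
  refine ⟨fun | 0 => P ⊓ degLE 𝒜 0 | n + 1 => Q n, fun n => ?_⟩
  cases n with
  | zero => exact isLeadSection_zero 𝒜 hP
  | succ n => exact isLeadSection_succ 𝒜 (hQ n) (hle n) (hinf n) (hsup n)

open Classical in
/-- `σ_n`: the inverse of `π_n : Q_n → B_n`, extended by `0`. -/
noncomputable def leadLift (Q : ℕ → AddSubgroup T) (n : ℕ) (a : T) : T :=
  if h : ∃ q ∈ Q n, projFun 𝒜 n q = a then h.choose else 0

noncomputable def liftMap (Q : ℕ → AddSubgroup T) (x : T) : T :=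
  ∑ᶠ n, leadLift 𝒜 Q n (projFun 𝒜 n x)

section Lift

variable {𝒜} {P : AddSubgroup T} {Q : ℕ → AddSubgroup T}

lemma leadLift_projFun (hQ : ∀ n, IsLeadSection 𝒜 P n (Q n)) {n : ℕ} {q : T} (hq : q ∈ Q n) :
    leadLift 𝒜 Q n (projFun 𝒜 n q) = q := by
  have h : ∃ q' ∈ Q n, projFun 𝒜 n q' = projFun 𝒜 n q := ⟨q, hq, rfl⟩
  rw [leadLift, dif_pos h]
  obtain ⟨hq', hproj⟩ := h.choose_spec
  exact sub_eq_zero.mp <| (hQ n).eq_zero_of_projFun_eq_zero _ (sub_mem hq' hq)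
    (by rw [projFun_sub, hproj, sub_self])

lemma exists_mem_projFun_eq (hQ : ∀ n, IsLeadSection 𝒜 P n (Q n)) {n : ℕ} {a : T}
    (ha : a ∈ leadComponent 𝒜 P n) :
    ∃ q ∈ Q n, projFun 𝒜 n q = a :=
  (hQ n).leadComponent_le ha

lemma leadLift_mem (hQ : ∀ n, IsLeadSection 𝒜 P n (Q n)) {n : ℕ} {a : T}
    (ha : a ∈ leadComponent 𝒜 P n) : leadLift 𝒜 Q n a ∈ Q n := by
  obtain ⟨q, hq, rfl⟩ := exists_mem_projFun_eq hQ ha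
  rwa [leadLift_projFun hQ hq]

lemma projFun_leadLift (hQ : ∀ n, IsLeadSection 𝒜 P n (Q n)) {n : ℕ} {a : T}
    (ha : a ∈ leadComponent 𝒜 P n) : projFun 𝒜 n (leadLift 𝒜 Q n a) = a := by
  obtain ⟨q, hq, rfl⟩ := exists_mem_projFun_eq hQ ha
  rw [leadLift_projFun hQ hq]

lemma leadLift_zero (hQ : ∀ n, IsLeadSection 𝒜 P n (Q n)) (n : ℕ) :
    leadLift 𝒜 Q n 0 = 0 := by
  simpa only [projFun_zero] using leadLift_projFun hQ (zero_mem (Q n))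

lemma leadLift_add (hQ : ∀ n, IsLeadSection 𝒜 P n (Q n)) {n : ℕ} {a b : T}
    (ha : a ∈ leadComponent 𝒜 P n) (hb : b ∈ leadComponent 𝒜 P n) :
    leadLift 𝒜 Q n (a + b) = leadLift 𝒜 Q n a + leadLift 𝒜 Q n b := by
  obtain ⟨p, hp, rfl⟩ := exists_mem_projFun_eq hQ ha
  obtain ⟨q, hq, rfl⟩ := exists_mem_projFun_eq hQ hb
  rw [← projFun_add, leadLift_projFun hQ (add_mem hp hq), leadLift_projFun hQ hp,
    leadLift_projFun hQ hq]

lemma leadLift_mul_left (hQ : ∀ n, IsLeadSection 𝒜 P n (Q n)) {n : ℕ} {s a : T}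
    (hs : s ∈ 𝒜 0) (ha : a ∈ leadComponent 𝒜 P n) :
    leadLift 𝒜 Q n (s * a) = s * leadLift 𝒜 Q n a := by
  obtain ⟨q, hq, rfl⟩ := exists_mem_projFun_eq hQ ha
  rw [← projFun_mul_left 𝒜 hs, leadLift_projFun hQ ((hQ n).isSubbimodule s hs q hq).1,
    leadLift_projFun hQ hq]

lemma leadLift_mul_right (hQ : ∀ n, IsLeadSection 𝒜 P n (Q n)) {n : ℕ} {s a : T}
    (hs : s ∈ 𝒜 0) (ha : a ∈ leadComponent 𝒜 P n) :
    leadLift 𝒜 Q n (a * s) = leadLift 𝒜 Q n a * s := by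
  obtain ⟨q, hq, rfl⟩ := exists_mem_projFun_eq hQ ha
  rw [← projFun_mul_right 𝒜 hs, leadLift_projFun hQ ((hQ n).isSubbimodule s hs q hq).2,
    leadLift_projFun hQ hq]

lemma liftMap_eq_sum (hQ : ∀ n, IsLeadSection 𝒜 P n (Q n)) {x : T} {s : Finset ℕ}
    (hs : ∀ i ∉ s, projFun 𝒜 i x = 0) :
    liftMap 𝒜 Q x = ∑ i ∈ s, leadLift 𝒜 Q i (projFun 𝒜 i x) := by
  refine finsum_eq_sum_of_support_subset _ fun i hi => ?_
  by_contra his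
  exact hi (by simp only [hs i his, leadLift_zero hQ])

lemma liftMap_of_mem (hQ : ∀ n, IsLeadSection 𝒜 P n (Q n)) {n : ℕ} {a : T} (ha : a ∈ 𝒜 n) :
    liftMap 𝒜 Q a = leadLift 𝒜 Q n a := by
  rw [liftMap_eq_sum hQ (s := {n}) fun i hi =>
      projFun_of_mem_of_ne 𝒜 ha (Ne.symm (Finset.notMem_singleton.mp hi)),
    Finset.sum_singleton, projFun_of_mem 𝒜 ha]

lemma liftMap_add (hQ : ∀ n, IsLeadSection 𝒜 P n (Q n)) {r s : T}
    (hr : r ∈ leadSub 𝒜 (P : Set T)) (hs : s ∈ leadSub 𝒜 (P : Set T)) :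
    liftMap 𝒜 Q (r + s) = liftMap 𝒜 Q r + liftMap 𝒜 Q s := by
  obtain ⟨u, hu⟩ := exists_finset_projFun_eq_zero 𝒜 r
  obtain ⟨v, hv⟩ := exists_finset_projFun_eq_zero 𝒜 s
  have hru : ∀ i ∉ u ∪ v, projFun 𝒜 i r = 0 := fun i hi => hu i (Finset.notMem_union.mp hi).1
  have hsv : ∀ i ∉ u ∪ v, projFun 𝒜 i s = 0 := fun i hi => hv i (Finset.notMem_union.mp hi).2
  rw [liftMap_eq_sum hQ (s := u ∪ v) fun i hi => by rw [projFun_add, hru i hi, hsv i hi, add_zero],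
    liftMap_eq_sum hQ hru, liftMap_eq_sum hQ hsv, ← Finset.sum_add_distrib]
  exact Finset.sum_congr rfl fun i _ => by
    rw [projFun_add, leadLift_add hQ (projFun_mem_leadComponent 𝒜 hr i)
      (projFun_mem_leadComponent 𝒜 hs i)]

lemma liftMap_mul_left (hQ : ∀ n, IsLeadSection 𝒜 P n (Q n)) {s r : T} (hs : s ∈ 𝒜 0)
    (hr : r ∈ leadSub 𝒜 (P : Set T)) : liftMap 𝒜 Q (s * r) = s * liftMap 𝒜 Q r := by
  obtain ⟨u, hu⟩ := exists_finset_projFun_eq_zero 𝒜 r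
  rw [liftMap_eq_sum hQ hu, Finset.mul_sum,
    liftMap_eq_sum hQ (s := u) fun i hi => by rw [projFun_mul_left 𝒜 hs, hu i hi, mul_zero]]
  exact Finset.sum_congr rfl fun i _ => by
    rw [projFun_mul_left 𝒜 hs, leadLift_mul_left hQ hs (projFun_mem_leadComponent 𝒜 hr i)]

lemma liftMap_mul_right (hQ : ∀ n, IsLeadSection 𝒜 P n (Q n)) {s r : T} (hs : s ∈ 𝒜 0)
    (hr : r ∈ leadSub 𝒜 (P : Set T)) : liftMap 𝒜 Q (r * s) = liftMap 𝒜 Q r * s := by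
  obtain ⟨u, hu⟩ := exists_finset_projFun_eq_zero 𝒜 r
  rw [liftMap_eq_sum hQ hu, Finset.sum_mul,
    liftMap_eq_sum hQ (s := u) fun i hi => by rw [projFun_mul_right 𝒜 hs, hu i hi, zero_mul]]
  exact Finset.sum_congr rfl fun i _ => by
    rw [projFun_mul_right 𝒜 hs, leadLift_mul_right hQ hs (projFun_mem_leadComponent 𝒜 hr i)]

lemma liftMap_mem_degLE (hQ : ∀ n, IsLeadSection 𝒜 P n (Q n)) {n : ℕ} {r : T}
    (hr : r ∈ leadSub 𝒜 (P : Set T)) (hrn : r ∈ degLE 𝒜 n) : liftMap 𝒜 Q r ∈ degLE 𝒜 n := by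
  obtain ⟨u, hu⟩ := exists_finset_projFun_eq_zero 𝒜 r
  rw [liftMap_eq_sum hQ hu]
  refine sum_mem fun i _ => ?_
  rcases le_or_gt i n with hin | hni
  · exact degLE_mono 𝒜 hin ((hQ i).le (leadLift_mem hQ (projFun_mem_leadComponent 𝒜 hr i))).2
  · rw [hrn i hni, leadLift_zero hQ]
    exact zero_mem _

lemma liftMap_mem (hQ : ∀ n, IsLeadSection 𝒜 P n (Q n)) {r : T} (hr : r ∈ leadSub 𝒜 (P : Set T)) :
    liftMap 𝒜 Q r ∈ P := by
  obtain ⟨u, hu⟩ := exists_finset_projFun_eq_zero 𝒜 r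
  rw [liftMap_eq_sum hQ hu]
  exact sum_mem fun i _ => ((hQ i).le (leadLift_mem hQ (projFun_mem_leadComponent 𝒜 hr i))).1

lemma projFun_liftMap_of_mem (hQ : ∀ n, IsLeadSection 𝒜 P n (Q n)) {n : ℕ} {r : T}
    (hr : r ∈ leadSub 𝒜 (P : Set T)) (hrn : r ∈ 𝒜 n) : projFun 𝒜 n (liftMap 𝒜 Q r) = r := by
  have hB := projFun_mem_leadComponent 𝒜 hr n
  rw [projFun_of_mem 𝒜 hrn] at hB
  rw [liftMap_of_mem hQ hrn, projFun_leadLift hQ hB]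

lemma sub_liftMap_projFun_mem (hQ : ∀ n, IsLeadSection 𝒜 P n (Q n)) {n : ℕ} {x : T}
    (hx : x ∈ P ⊓ degLE 𝒜 n) :
    x - liftMap 𝒜 Q (projFun 𝒜 n x) ∈ P ⊓ degLE 𝒜 n ∧
      projFun 𝒜 n (x - liftMap 𝒜 Q (projFun 𝒜 n x)) = 0 := by
  have ha : projFun 𝒜 n x ∈ leadComponent 𝒜 P n := (mem_leadComponent 𝒜).mpr ⟨x, hx, rfl⟩
  rw [liftMap_of_mem hQ (projFun_mem 𝒜 n x)]
  exact ⟨sub_mem hx ((hQ n).le (leadLift_mem hQ ha)),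
    by rw [projFun_sub, projFun_leadLift hQ ha, sub_self]⟩

lemma exists_liftMap_eq (hQ : ∀ n, IsLeadSection 𝒜 P n (Q n)) {n : ℕ} {x : T}
    (hx : x ∈ P ⊓ degLE 𝒜 n) :
    ∃ r ∈ leadSub 𝒜 (P : Set T), liftMap 𝒜 Q r = x := by
  induction n generalizing x with
  | zero =>
    obtain ⟨hdiff, hproj⟩ := sub_liftMap_projFun_mem hQ hx
    exact ⟨projFun 𝒜 0 x, leadComponent_le_leadSub 𝒜 P 0 ((mem_leadComponent 𝒜).mpr ⟨x, hx, rfl⟩),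
      (sub_eq_zero.mp (eq_zero_of_mem_degLE_zero 𝒜 hdiff.2 hproj)).symm⟩
  | succ m ih =>
    obtain ⟨hdiff, hproj⟩ := sub_liftMap_projFun_mem hQ hx
    have ha := leadComponent_le_leadSub 𝒜 P (m + 1) ((mem_leadComponent 𝒜).mpr ⟨x, hx, rfl⟩)
    obtain ⟨r, hr, hrx⟩ := ih ⟨hdiff.1, mem_degLE_of_projFun_eq_zero 𝒜 hdiff.2 hproj⟩
    exact ⟨r + projFun 𝒜 (m + 1) x, add_mem hr ha,
      by rw [liftMap_add hQ hr ha, hrx, sub_add_cancel]⟩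

lemma liftMap_image_leadSub (hQ : ∀ n, IsLeadSection 𝒜 P n (Q n)) :
    liftMap 𝒜 Q '' (leadSub 𝒜 (P : Set T) : Set T) = P := by
  refine Set.Subset.antisymm ?_ fun x hx => ?_
  · rintro _ ⟨r, hr, rfl⟩
    exact liftMap_mem hQ hr
  · obtain ⟨n, hn⟩ := exists_mem_degLE 𝒜 x
    exact exists_liftMap_eq hQ ⟨hx, hn⟩

end Lift

end Graded

/-- Theorem 2.4: if each `P^{≤n}` is a direct summand of `P^{≤n+1}` as an `S`-bimodule,
then `P = α(R_P)` for some filtered `S`-bimodule map `α : R_P → T` whose degree-zero component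
is the inclusion. -/
theorem stmt_7 (𝒜 : ℕ → AddSubgroup T) [GradedRing 𝒜]
    (P : AddSubgroup T) (hP : IsSubbimodule 𝒜 P)
    (hsummand : ∀ n, ∃ Q : AddSubgroup T, IsSubbimodule 𝒜 Q ∧
      Q ≤ P ⊓ degLE 𝒜 (n + 1) ∧ (P ⊓ degLE 𝒜 n) ⊓ Q = ⊥ ∧
      (P ⊓ degLE 𝒜 n) ⊔ Q = P ⊓ degLE 𝒜 (n + 1)) :
    ∃ α : T → T,
      (∀ r ∈ leadSub 𝒜 (P : Set T), ∀ s ∈ leadSub 𝒜 (P : Set T),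
        α (r + s) = α r + α s) ∧
      (∀ s ∈ 𝒜 0, ∀ r ∈ leadSub 𝒜 (P : Set T),
        α (s * r) = s * α r ∧ α (r * s) = α r * s) ∧
      (∀ n, ∀ r ∈ leadSub 𝒜 (P : Set T), r ∈ degLE 𝒜 n → α r ∈ degLE 𝒜 n) ∧
      (∀ n, ∀ r ∈ leadSub 𝒜 (P : Set T), r ∈ 𝒜 n → projFun 𝒜 n (α r) = r) ∧
      (P : Set T) = α '' (leadSub 𝒜 (P : Set T) : Set T) := by
  obtain ⟨Q, hQ⟩ := exists_isLeadSection 𝒜 hP hsummand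
  exact ⟨liftMap 𝒜 Q, fun r hr s hs => liftMap_add hQ hr hs,
    fun s hs r hr => ⟨liftMap_mul_left hQ hs hr, liftMap_mul_right hQ hs hr⟩,
    fun n r hr => liftMap_mem_degLE hQ hr, fun n r hr => projFun_liftMap_of_mem hQ hr,
    (liftMap_image_leadSub hQ).symm⟩
end

section
/- Let R be a pure graded S-subbimodule (i.e. R = R^n for some n) which generates the graded ideal I of a strongly graded connected S-ring T. Then R is a bimodule of relations for T/I, i.e. R ⊕ (I T^1 + T^1 I) = I. -/
/-!
Every element of `I = (R)` has vanishing components in degrees `< n`, so `Ĩ` lies in degrees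
`≥ n + 1` and meets `R ⊆ T^n` trivially. Strong grading gives `T^{q+1} I ⊆ Ĩ` and
`I T^{q+1} ⊆ Ĩ`, so `Ĩ` is an ideal; splitting `t ∈ T` into its degree-`0` part, which
preserves `R`, and its positive part, which maps `R` into `Ĩ`, shows that `R + Ĩ` is an ideal.
It contains `R` and lies in `I`, hence equals `I`.
-/

variable {T : Type*} [Ring T]

/-- The subgroup `I·T^1 + T^1·I`. -/
noncomputable def tildeI (𝒜 : ℕ → AddSubgroup T) (I : Set T) : AddSubgroup T :=
  AddSubgroup.closure
    ({y : T | ∃ a ∈ I, ∃ b ∈ 𝒜 1, y = a * b} ∪ {y : T | ∃ a ∈ 𝒜 1, ∃ b ∈ I, y = a * b})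

section Degree

variable (𝒜 : ℕ → AddSubgroup T) [GradedRing 𝒜]

lemma projFun_of_mem_same {n : ℕ} {x : T} (hx : x ∈ 𝒜 n) : projFun 𝒜 n x = x :=
  DirectSum.decompose_of_mem_same 𝒜 hx

lemma projFun_of_mem_ne {m n : ℕ} {x : T} (hx : x ∈ 𝒜 n) (hmn : m ≠ n) : projFun 𝒜 m x = 0 :=
  DirectSum.decompose_of_mem_ne 𝒜 hx hmn.symm

noncomputable def degGE (n : ℕ) : AddSubgroup T where
  carrier := {x | ∀ m, m < n → projFun 𝒜 m x = 0}
  zero_mem' _ _ := by simp [projFun]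
  add_mem' ha hb m hm := by rw [projFun_add, ha m hm, hb m hm, add_zero]
  neg_mem' ha m hm := by rw [projFun_neg, ha m hm, neg_zero]

lemma mem_degGE_of_mem {n : ℕ} {x : T} (hx : x ∈ 𝒜 n) : x ∈ degGE 𝒜 n :=
  fun _ hm => projFun_of_mem_ne 𝒜 hx hm.ne

lemma mem_degGE_zero (x : T) : x ∈ degGE 𝒜 0 :=
  fun _ hm => absurd hm (Nat.not_lt_zero _)

lemma mul_mem_degGE {i j : ℕ} {x y : T} (hx : x ∈ degGE 𝒜 i) (hy : y ∈ degGE 𝒜 j) :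
    x * y ∈ degGE 𝒜 (i + j) := by
  classical
  intro m hm
  unfold projFun
  rw [DirectSum.decompose_mul, DirectSum.coe_mul_apply]
  refine Finset.sum_eq_zero fun ⟨k, l⟩ hkl => ?_
  simp only [Finset.mem_filter, Finset.mem_product, DFinsupp.mem_support_iff] at hkl
  obtain ⟨⟨hk, hl⟩, rfl⟩ := hkl
  rcases lt_or_ge k i with hki | hik
  · exact absurd (ZeroMemClass.coe_eq_zero.mp (hx k hki)) hk
  · exact absurd (ZeroMemClass.coe_eq_zero.mp (hy l (by omega))) hl

lemma span_subset_degGE {s : Set T} {n : ℕ} (hs : s ⊆ degGE 𝒜 n) :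
    (TwoSidedIdeal.span s : Set T) ⊆ degGE 𝒜 n := by
  intro x hx
  induction hx using TwoSidedIdeal.span_induction with
  | mem x hx => exact hs hx
  | zero => exact zero_mem _
  | add x y _ _ hx hy => exact add_mem hx hy
  | neg x _ hx => exact neg_mem hx
  | left_absorb a x _ hx => simpa using mul_mem_degGE 𝒜 (mem_degGE_zero 𝒜 a) hx
  | right_absorb b x _ hx => simpa using mul_mem_degGE 𝒜 hx (mem_degGE_zero 𝒜 b)

lemma tildeI_le_degGE {I : Set T} {n : ℕ} (hI : I ⊆ degGE 𝒜 n) :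
    tildeI 𝒜 I ≤ degGE 𝒜 (n + 1) := by
  refine AddSubgroup.closure_le _ |>.mpr ?_
  rintro _ (⟨a, ha, b, hb, rfl⟩ | ⟨a, ha, b, hb, rfl⟩)
  · exact mul_mem_degGE 𝒜 (hI ha) (mem_degGE_of_mem 𝒜 hb)
  · simpa [add_comm] using mul_mem_degGE 𝒜 (mem_degGE_of_mem 𝒜 ha) (hI hb)

theorem inf_tildeI_span_eq_bot {n : ℕ} {R : AddSubgroup T} (hpure : (R : Set T) ⊆ 𝒜 n) :
    R ⊓ tildeI 𝒜 (TwoSidedIdeal.span (R : Set T)) = ⊥ := by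
  have hspan := span_subset_degGE 𝒜 fun r hr => mem_degGE_of_mem 𝒜 (hpure hr)
  refine eq_bot_iff.mpr fun x hx => ?_
  obtain ⟨hxR, hxI⟩ := AddSubgroup.mem_inf.mp hx
  rw [AddSubgroup.mem_bot, ← projFun_of_mem_same 𝒜 (hpure hxR)]
  exact tildeI_le_degGE 𝒜 hspan hxI n n.lt_succ_self

lemma mul_mem_of_forall_homogeneous_left (P : AddSubgroup T) (t : T) {a : T}
    (h : ∀ p, ∀ x ∈ 𝒜 p, x * a ∈ P) : t * a ∈ P := by
  classical
  rw [← DirectSum.sum_support_decompose 𝒜 t, Finset.sum_mul]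
  exact AddSubgroup.sum_mem _ fun p _ => h p _ (SetLike.coe_mem _)

lemma mul_mem_of_forall_homogeneous_right (P : AddSubgroup T) {a : T} (t : T)
    (h : ∀ p, ∀ x ∈ 𝒜 p, a * x ∈ P) : a * t ∈ P := by
  classical
  rw [← DirectSum.sum_support_decompose 𝒜 t, Finset.mul_sum]
  exact AddSubgroup.sum_mem _ fun p _ => h p _ (SetLike.coe_mem _)

end Degree

section TildeI

variable {𝒜 : ℕ → AddSubgroup T} (I : TwoSidedIdeal T)

lemma mul_mem_tildeI_of_mem_left {a b : T} (ha : a ∈ I) (hb : b ∈ 𝒜 1) :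
    a * b ∈ tildeI 𝒜 (I : Set T) :=
  AddSubgroup.subset_closure (Or.inl ⟨a, ha, b, hb, rfl⟩)

lemma mul_mem_tildeI_of_mem_right {a b : T} (ha : a ∈ 𝒜 1) (hb : b ∈ I) :
    a * b ∈ tildeI 𝒜 (I : Set T) :=
  AddSubgroup.subset_closure (Or.inr ⟨a, ha, b, hb, rfl⟩)

lemma tildeI_subset : (tildeI 𝒜 (I : Set T) : Set T) ⊆ I :=
  AddSubgroup.closure_le I.asIdeal.toAddSubgroup |>.mpr <| by
    rintro _ (⟨a, ha, b, _, rfl⟩ | ⟨a, _, b, hb, rfl⟩)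
    · exact I.mul_mem_right a b ha
    · exact I.mul_mem_left a b hb

variable {I}

lemma StronglyGraded.mul_mem_tildeI_of_mem_succ_left (hsg : StronglyGraded 𝒜) {q : ℕ} {x b : T}
    (hx : x ∈ 𝒜 (q + 1)) (hb : b ∈ I) : x * b ∈ tildeI 𝒜 (I : Set T) := by
  refine (AddSubgroup.closure_le ((tildeI 𝒜 I).comap (AddMonoidHom.mulRight b))).mpr ?_ (hsg q hx)
  rintro _ ⟨c, hc, d, _, rfl⟩
  simpa [mul_assoc] using mul_mem_tildeI_of_mem_right I hc (I.mul_mem_left d b hb)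

lemma StronglyGraded.mul_mem_tildeI_of_mem_succ_right (hsg : StronglyGraded 𝒜) {q : ℕ} {a x : T}
    (ha : a ∈ I) (hx : x ∈ 𝒜 (q + 1)) : a * x ∈ tildeI 𝒜 (I : Set T) := by
  induction q generalizing a x with
  | zero => exact mul_mem_tildeI_of_mem_left I ha hx
  | succ q ih =>
    refine (AddSubgroup.closure_le ((tildeI 𝒜 I).comap (AddMonoidHom.mulLeft a))).mpr ?_
      (hsg (q + 1) hx)
    rintro _ ⟨c, _, d, hd, rfl⟩
    simpa [mul_assoc] using ih (I.mul_mem_right a c ha) hd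

variable [GradedRing 𝒜]

lemma StronglyGraded.mul_mem_tildeI_left (hsg : StronglyGraded 𝒜) (t : T) {w : T}
    (hw : w ∈ tildeI 𝒜 (I : Set T)) : t * w ∈ tildeI 𝒜 (I : Set T) := by
  refine (AddSubgroup.closure_le ((tildeI 𝒜 I).comap (AddMonoidHom.mulLeft t))).mpr ?_ hw
  rintro _ (⟨a, ha, b, hb, rfl⟩ | ⟨a, ha, b, hb, rfl⟩)
  · simpa [mul_assoc] using mul_mem_tildeI_of_mem_left I (I.mul_mem_left t a ha) hb
  · show t * (a * b) ∈ tildeI 𝒜 I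
    refine mul_mem_of_forall_homogeneous_left 𝒜 _ t fun p x hx => ?_
    rw [← mul_assoc]
    exact hsg.mul_mem_tildeI_of_mem_succ_left (SetLike.mul_mem_graded hx ha) hb

lemma StronglyGraded.mul_mem_tildeI_right (hsg : StronglyGraded 𝒜) (t : T) {w : T}
    (hw : w ∈ tildeI 𝒜 (I : Set T)) : w * t ∈ tildeI 𝒜 (I : Set T) := by
  refine (AddSubgroup.closure_le ((tildeI 𝒜 I).comap (AddMonoidHom.mulRight t))).mpr ?_ hw
  rintro _ (⟨a, ha, b, hb, rfl⟩ | ⟨a, ha, b, hb, rfl⟩)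
  · show a * b * t ∈ tildeI 𝒜 I
    refine mul_mem_of_forall_homogeneous_right 𝒜 _ t fun p x hx => ?_
    rw [mul_assoc]
    exact hsg.mul_mem_tildeI_of_mem_succ_right ha
      (by simpa [add_comm] using SetLike.mul_mem_graded hb hx)
  · simpa [mul_assoc] using mul_mem_tildeI_of_mem_right I ha (I.mul_mem_right b t hb)

end TildeI

section Relations

variable {𝒜 : ℕ → AddSubgroup T} [GradedRing 𝒜] {R : AddSubgroup T}

local notation "J" => TwoSidedIdeal.span (R : Set T)

lemma StronglyGraded.mul_mem_sup_tildeI_left (hsg : StronglyGraded 𝒜) (hRbi : IsSubbimodule 𝒜 R)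
    (t : T) {y : T} (hy : y ∈ R ⊔ tildeI 𝒜 (J : Set T)) : t * y ∈ R ⊔ tildeI 𝒜 (J : Set T) := by
  obtain ⟨r, hr, w, hw, rfl⟩ := AddSubgroup.mem_sup.mp hy
  rw [mul_add]
  refine add_mem (mul_mem_of_forall_homogeneous_left 𝒜 _ t ?_)
    (AddSubgroup.mem_sup_right (hsg.mul_mem_tildeI_left t hw))
  rintro (_ | q) x hx
  · exact AddSubgroup.mem_sup_left (hRbi x hx r hr).1
  · exact AddSubgroup.mem_sup_right
      (hsg.mul_mem_tildeI_of_mem_succ_left hx (TwoSidedIdeal.subset_span hr))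

lemma StronglyGraded.mul_mem_sup_tildeI_right (hsg : StronglyGraded 𝒜) (hRbi : IsSubbimodule 𝒜 R)
    (t : T) {y : T} (hy : y ∈ R ⊔ tildeI 𝒜 (J : Set T)) : y * t ∈ R ⊔ tildeI 𝒜 (J : Set T) := by
  obtain ⟨r, hr, w, hw, rfl⟩ := AddSubgroup.mem_sup.mp hy
  rw [add_mul]
  refine add_mem (mul_mem_of_forall_homogeneous_right 𝒜 _ t ?_)
    (AddSubgroup.mem_sup_right (hsg.mul_mem_tildeI_right t hw))
  rintro (_ | q) x hx
  · exact AddSubgroup.mem_sup_left (hRbi x hx r hr).2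
  · exact AddSubgroup.mem_sup_right
      (hsg.mul_mem_tildeI_of_mem_succ_right (TwoSidedIdeal.subset_span hr) hx)

theorem StronglyGraded.sup_tildeI_span_eq (hsg : StronglyGraded 𝒜) (hRbi : IsSubbimodule 𝒜 R) :
    ((R ⊔ tildeI 𝒜 (J : Set T) : AddSubgroup T) : Set T) = J := by
  refine subset_antisymm
    (sup_le (c := (TwoSidedIdeal.asIdeal J).toAddSubgroup) (fun r hr => TwoSidedIdeal.subset_span hr)
      (tildeI_subset J)) fun x hx => ?_
  induction hx using TwoSidedIdeal.span_induction with
  | mem x hx => exact AddSubgroup.mem_sup_left hx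
  | zero => exact zero_mem _
  | add x y _ _ hx hy => exact add_mem hx hy
  | neg x _ hx => exact neg_mem hx
  | left_absorb a x _ hx => exact hsg.mul_mem_sup_tildeI_left hRbi a hx
  | right_absorb b x _ hx => exact hsg.mul_mem_sup_tildeI_right hRbi b hx

end Relations

/-- Corollary 2.14: a pure generating bimodule is a bimodule of relations. -/
theorem stmt_12 (𝒜 : ℕ → AddSubgroup T) [GradedRing 𝒜] (hsg : StronglyGraded 𝒜)
    (n : ℕ) (R : AddSubgroup T) (hRbi : IsSubbimodule 𝒜 R)
    (hpure : (R : Set T) ⊆ (𝒜 n : Set T))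
    (I : TwoSidedIdeal T) (hgen : TwoSidedIdeal.span (R : Set T) = I) :
    R ⊓ tildeI 𝒜 (I : Set T) = ⊥ ∧
      ((R ⊔ tildeI 𝒜 (I : Set T) : AddSubgroup T) : Set T) = (I : Set T) := by
  subst hgen
  exact ⟨inf_tildeI_span_eq_bot 𝒜 hpure, hsg.sup_tildeI_span_eq hRbi⟩
end
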